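/- Let 𝔤 be a finite-dimensional real Lie algebra equipped with an Ad-invariant inner product ⟨·,·⟩. Let A, E : ℝ × ℝ³ → (Fin 3 → 𝔤) be smooth and satisfy ∂_t A = −E and ∂_t E = curl B + ⋆[A,B] on ℝ × ℝ³, where B(t,·) := curl A(t,·) + (1/2) • ⋆[A(t,·),A(t,·)]. Then for every smooth compactly supported q : ℝ³ → 𝔤, the function t ↦ ∫_{ℝ³} Σ_μ ⟨E(t,x)(μ), (grad q)(x)(μ) + ⁅A(t,x)(μ), q(x)⁆⟩ dx is constant in t. In particular, if this weak constraint vanishes at t = 0 for all such q, it vanishes for all times. -/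

import Mathlib

open scoped BigOperators

/-- The Levi-Civita symbol on three indices (totally antisymmetric, `ε 0 1 2 = 1`). -/
noncomputable def levicivita (i j k : Fin 3) : ℝ :=
  (((j : ℕ) : ℝ) - ((i : ℕ) : ℝ)) * (((k : ℕ) : ℝ) - ((j : ℕ) : ℝ)) *
    (((k : ℕ) : ℝ) - ((i : ℕ) : ℝ)) / 2

/-- The partial derivative `∂_μ f` on `ℝ³`. -/
noncomputable def pderiv3 {E : Type*} [NormedAddCommGroup E] [NormedSpace ℝ E]
    (μ : Fin 3) (f : EuclideanSpace ℝ (Fin 3) → E) (x : EuclideanSpace ℝ (Fin 3)) : E :=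
  fderiv ℝ f x (EuclideanSpace.single μ 1)

/-- The gradient of a `𝔤`-valued function on `ℝ³`. -/
noncomputable def grad3 {𝔤 : Type*} [NormedAddCommGroup 𝔤] [NormedSpace ℝ 𝔤]
    (q : EuclideanSpace ℝ (Fin 3) → 𝔤) (x : EuclideanSpace ℝ (Fin 3)) : Fin 3 → 𝔤 :=
  fun μ => pderiv3 μ q x

/-- The curl of a `𝔤`-valued vector field on `ℝ³`:
`(curl A)(α) = Σ_{μ,ν} ε(α,μ,ν) • ∂_μ A(ν)`. -/
noncomputable def curl3 {𝔤 : Type*} [NormedAddCommGroup 𝔤] [NormedSpace ℝ 𝔤]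
    (A : EuclideanSpace ℝ (Fin 3) → Fin 3 → 𝔤) (x : EuclideanSpace ℝ (Fin 3)) :
    Fin 3 → 𝔤 :=
  fun α => ∑ μ : Fin 3, ∑ ν : Fin 3, levicivita α μ ν • pderiv3 μ (fun y => A y ν) x

/-- The divergence of a `𝔤`-valued vector field on `ℝ³`: `div A = Σ_μ ∂_μ A(μ)`. -/
noncomputable def div3 {𝔤 : Type*} [NormedAddCommGroup 𝔤] [NormedSpace ℝ 𝔤]
    (A : EuclideanSpace ℝ (Fin 3) → Fin 3 → 𝔤) (x : EuclideanSpace ℝ (Fin 3)) : 𝔤 :=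
  ∑ μ : Fin 3, pderiv3 μ (fun y => A y μ) x

/-- The cross-bracket `⋆[v,w](α) = Σ_{μ,ν} ε(α,μ,ν) • ⁅v(μ), w(ν)⁆`, where the Lie
bracket of `𝔤` is the continuous bilinear map `br`. -/
noncomputable def crossBr {𝔤 : Type*} [NormedAddCommGroup 𝔤] [NormedSpace ℝ 𝔤]
    (br : 𝔤 →L[ℝ] 𝔤 →L[ℝ] 𝔤) (v w : Fin 3 → 𝔤) : Fin 3 → 𝔤 :=
  fun α => ∑ μ : Fin 3, ∑ ν : Fin 3, levicivita α μ ν • br (v μ) (w ν)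

/-- The dot-bracket `⋆[v,⋆w] = Σ_α ⁅v(α), w(α)⁆`, where the Lie bracket of `𝔤` is the
continuous bilinear map `br`. -/
noncomputable def dotBr {𝔤 : Type*} [NormedAddCommGroup 𝔤] [NormedSpace ℝ 𝔤]
    (br : 𝔤 →L[ℝ] 𝔤 →L[ℝ] 𝔤) (v w : Fin 3 → 𝔤) : 𝔤 :=
  ∑ α : Fin 3, br (v α) (w α)

open MeasureTheory

/-!
Differentiate the constraint in time. Since `∂ₜA = -E`, the term `⟨E, ⁅∂ₜA, q⁆⟩` equals
`-⟨E, ⁅E, q⁆⟩ = -⟨⁅E, E⁆, q⟩ = 0` by Ad-invariance, and what remains is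
`⟨curl B + ⋆[A,B], D_A q⟩` with `D_A q = grad q + ⁅A, q⁆`. Ad-invariance moves `⋆[A,·]` across
the pairing, and `div (B × C) = ⟨curl B, C⟩ - ⟨B, curl C⟩`, so this equals
`div (B × D_A q) + ⟨B, curl D_A q + ⋆[A, D_A q]⟩`. The covariant curl of a covariant gradient is
`⁅B, q⁆` (symmetry of second derivatives and the Jacobi identity), and `⟨B, ⁅B, q⁆⟩ = 0`.
So the time derivative is the integral of a compactly supported divergence, which vanishes.
-/

local notation "ℝ³" => EuclideanSpace ℝ (Fin 3)

lemma levicivita_swap_right (i j k : Fin 3) : levicivita i k j = -levicivita i j k := by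
  fin_cases i <;> fin_cases j <;> fin_cases k <;> norm_num [levicivita]

lemma levicivita_swap_left (i j k : Fin 3) : levicivita j i k = -levicivita i j k := by
  fin_cases i <;> fin_cases j <;> fin_cases k <;> norm_num [levicivita]

lemma levicivita_cycle (i j k : Fin 3) : levicivita j k i = levicivita i j k := by
  fin_cases i <;> fin_cases j <;> fin_cases k <;> norm_num [levicivita]

section LeviCivitaSums

variable {M : Type*} [AddCommGroup M] [Module ℝ M]

lemma sum_levicivita_smul_swap (α : Fin 3) (g : Fin 3 → Fin 3 → M) :
    ∑ μ, ∑ ν, levicivita α μ ν • g ν μ = -∑ μ, ∑ ν, levicivita α μ ν • g μ ν := by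
  rw [Finset.sum_comm, ← Finset.sum_neg_distrib]
  refine Finset.sum_congr rfl fun μ _ => ?_
  rw [← Finset.sum_neg_distrib]
  exact Finset.sum_congr rfl fun ν _ => by rw [levicivita_swap_right, neg_smul]

lemma sum_levicivita_smul_eq_half_sub (α : Fin 3) (g : Fin 3 → Fin 3 → M) :
    ∑ μ, ∑ ν, levicivita α μ ν • g μ ν
      = (1 / 2 : ℝ) • ∑ μ, ∑ ν, levicivita α μ ν • (g μ ν - g ν μ) := by
  simp only [smul_sub, Finset.sum_sub_distrib, sum_levicivita_smul_swap α g]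
  module

lemma sum_levicivita_smul_eq_zero_of_symm (α : Fin 3) {g : Fin 3 → Fin 3 → M}
    (hg : ∀ μ ν, g μ ν = g ν μ) : ∑ μ, ∑ ν, levicivita α μ ν • g μ ν = 0 := by
  simp [sum_levicivita_smul_eq_half_sub α g, ← hg]

lemma sum_levicivita_smul_cycle (g : Fin 3 → Fin 3 → Fin 3 → M) :
    ∑ α, ∑ μ, ∑ ν, levicivita α μ ν • g α μ ν = ∑ α, ∑ μ, ∑ ν, levicivita α μ ν • g μ ν α := by
  symm
  calc ∑ γ, ∑ α, ∑ μ, levicivita γ α μ • g α μ γ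
      = ∑ γ, ∑ α, ∑ μ, levicivita α μ γ • g α μ γ := by
        simp only [levicivita_cycle]
    _ = ∑ α, ∑ μ, ∑ γ, levicivita α μ γ • g α μ γ := by
        rw [Finset.sum_comm]
        exact Finset.sum_congr rfl fun α _ => Finset.sum_comm

end LeviCivitaSums

section LieBracket

variable {𝔤 : Type*} [NormedAddCommGroup 𝔤] [NormedSpace ℝ 𝔤] {br : 𝔤 →L[ℝ] 𝔤 →L[ℝ] 𝔤}

lemma bracket_swap (br_alt : ∀ a : 𝔤, br a a = 0) (u v : 𝔤) : br u v = -br v u := by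
  have h := br_alt (u + v)
  simp only [map_add, add_apply, br_alt, zero_add, add_zero] at h
  exact eq_neg_of_add_eq_zero_right h

lemma bracket_bracket (br_alt : ∀ a : 𝔤, br a a = 0)
    (br_jacobi : ∀ a b c : 𝔤, br a (br b c) + br b (br c a) + br c (br a b) = 0) (u v w : 𝔤) :
    br (br u v) w = br u (br v w) - br v (br u w) := by
  have h := br_jacobi u v w
  rw [bracket_swap br_alt w u, map_neg, bracket_swap br_alt w (br u v)] at h
  linear_combination (norm := abel) -h

variable {ip : 𝔤 →L[ℝ] 𝔤 →L[ℝ] ℝ}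

lemma invariant_bracket_self (br_alt : ∀ a : 𝔤, br a a = 0)
    (ip_ad : ∀ a b c : 𝔤, ip (br a b) c = ip a (br b c)) (b c : 𝔤) : ip b (br b c) = 0 := by
  rw [← ip_ad, br_alt, map_zero, zero_apply]

lemma sum_invariant_crossBr (br_alt : ∀ a : 𝔤, br a a = 0)
    (ip_ad : ∀ a b c : 𝔤, ip (br a b) c = ip a (br b c)) (u v w : Fin 3 → 𝔤) :
    ∑ α, ip (crossBr br u v α) (w α) = ∑ α, ip (v α) (crossBr br u w α) := by
  have hterm : ∀ μ ν α, ip (br (u μ) (v ν)) (w α) = -ip (v ν) (br (u μ) (w α)) := by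
    intro μ ν α
    rw [bracket_swap br_alt, map_neg, neg_apply, ip_ad]
  simp only [crossBr, map_sum, map_smul, sum_apply, smul_apply, hterm, smul_neg,
    Finset.sum_neg_distrib]
  rw [sum_levicivita_smul_cycle (fun α μ ν => ip (v α) (br (u μ) (w ν))), ← Finset.sum_neg_distrib]
  exact Finset.sum_congr rfl fun α _ =>
    (sum_levicivita_smul_swap α (fun μ ν => ip (v ν) (br (u μ) (w α)))).symm

end LieBracket

section PartialDerivatives

variable {V W X : Type*} [NormedAddCommGroup V] [NormedSpace ℝ V]
  [NormedAddCommGroup W] [NormedSpace ℝ W] [NormedAddCommGroup X] [NormedSpace ℝ X]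
  {f : ℝ³ → V} {x : ℝ³}

lemma HasFDerivAt.pderiv3_eq {f' : ℝ³ →L[ℝ] V} (h : HasFDerivAt f f' x) (μ : Fin 3) :
    pderiv3 μ f x = f' (EuclideanSpace.single μ 1) := by
  rw [pderiv3, h.fderiv]

lemma pderiv3_const_smul (hf : DifferentiableAt ℝ f x) (c : ℝ) (μ : Fin 3) :
    pderiv3 μ (fun y => c • f y) x = c • pderiv3 μ f x :=
  (hf.hasFDerivAt.const_smul c).pderiv3_eq μ

lemma pderiv3_add {g : ℝ³ → V} (hf : DifferentiableAt ℝ f x) (hg : DifferentiableAt ℝ g x)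
    (μ : Fin 3) : pderiv3 μ (fun y => f y + g y) x = pderiv3 μ f x + pderiv3 μ g x :=
  (hf.hasFDerivAt.add hg.hasFDerivAt).pderiv3_eq μ

lemma pderiv3_sum {ι : Type*} {s : Finset ι} {f : ι → ℝ³ → V}
    (hf : ∀ i ∈ s, DifferentiableAt ℝ (f i) x) (μ : Fin 3) :
    pderiv3 μ (fun y => ∑ i ∈ s, f i y) x = ∑ i ∈ s, pderiv3 μ (f i) x := by
  rw [(HasFDerivAt.fun_sum fun i hi => (hf i hi).hasFDerivAt).pderiv3_eq μ]
  simp [pderiv3]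

lemma pderiv3_bilin (b : V →L[ℝ] W →L[ℝ] X) {g : ℝ³ → W} (hf : DifferentiableAt ℝ f x)
    (hg : DifferentiableAt ℝ g x) (μ : Fin 3) :
    pderiv3 μ (fun y => b (f y) (g y)) x = b (pderiv3 μ f x) (g x) + b (f x) (pderiv3 μ g x) := by
  rw [(b.hasFDerivAt_of_bilinear hf.hasFDerivAt hg.hasFDerivAt).pderiv3_eq μ]
  simp [pderiv3, add_comm]

lemma pderiv3_comm (hf : ContDiffAt ℝ 2 f x) (μ ν : Fin 3) :
    pderiv3 μ (pderiv3 ν f) x = pderiv3 ν (pderiv3 μ f) x := by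
  have hd : DifferentiableAt ℝ (fderiv ℝ f) x :=
    (hf.fderiv_right (m := 1) le_rfl).differentiableAt one_ne_zero
  have hsecond : ∀ i j : Fin 3, pderiv3 i (pderiv3 j f) x
      = fderiv ℝ (fderiv ℝ f) x (EuclideanSpace.single i 1) (EuclideanSpace.single j 1) :=
    fun i j => ((hd.hasFDerivAt.clm_apply (hasFDerivAt_const (EuclideanSpace.single j 1) x)
      ).pderiv3_eq i).trans (by simp)
  rw [hsecond, hsecond, (hf.isSymmSndFDerivAt (by simp)).eq]

lemma pderiv3_eq_zero_of_notMem_tsupport (hx : x ∉ tsupport f) (μ : Fin 3) :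
    pderiv3 μ f x = 0 := by
  simp [pderiv3, fderiv_of_notMem_tsupport ℝ hx]

lemma ContDiff.pderiv3 {m n : WithTop ℕ∞} (hf : ContDiff ℝ n f) (hmn : m + 1 ≤ n) (μ : Fin 3) :
    ContDiff ℝ m (_root_.pderiv3 μ f) :=
  (hf.fderiv_right hmn).clm_apply contDiff_const

lemma integral_pderiv3_eq_zero (hf : ContDiff ℝ 1 f) (hsupp : HasCompactSupport f) (μ : Fin 3) :
    ∫ x, pderiv3 μ f x = 0 := by
  have hint : Integrable fun x => fderiv ℝ f x (EuclideanSpace.single μ 1) :=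
    (hf.pderiv3 (m := 0) le_rfl μ).continuous.integrable_of_hasCompactSupport
      (hsupp.fderiv_apply ℝ _)
  have hibp := integral_smul_fderiv_eq_neg_fderiv_smul_of_integrable (μ := volume)
    (f := fun _ : ℝ³ => (1 : ℝ)) (g := f) (v := EuclideanSpace.single μ 1)
    (by simp) (by simpa using hint)
    (by simpa using hf.continuous.integrable_of_hasCompactSupport hsupp)
    (fun _ _ => differentiableAt_const 1)
    (fun y _ => hf.differentiable one_ne_zero y)
  simpa [pderiv3] using hibp

lemma integral_div3_eq_zero {G : ℝ³ → Fin 3 → V} (hG : ContDiff ℝ 1 G)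
    (hsupp : HasCompactSupport G) :
    ∫ x, div3 G x = 0 := by
  have hGμ : ∀ μ : Fin 3, ContDiff ℝ 1 fun y => G y μ := fun μ => contDiff_pi.1 hG μ
  have hsuppμ : ∀ μ : Fin 3, HasCompactSupport fun y => G y μ := fun μ =>
    hsupp.comp_left (g := fun v : Fin 3 → V => v μ) rfl
  rw [show (fun x => div3 G x) = fun x => ∑ μ, pderiv3 μ (fun y => G y μ) x from rfl,
    integral_finsetSum _ fun μ _ =>
    ((hGμ μ).pderiv3 (m := 0) le_rfl μ).continuous.integrable_of_hasCompactSupport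
      ((hsuppμ μ).fderiv_apply ℝ _)]
  exact Finset.sum_eq_zero fun μ _ => integral_pderiv3_eq_zero (hGμ μ) (hsuppμ μ) μ

end PartialDerivatives

section CrossProduct

variable {V W X : Type*} [NormedAddCommGroup V] [NormedSpace ℝ V]
  [NormedAddCommGroup W] [NormedSpace ℝ W] [NormedAddCommGroup X] [NormedSpace ℝ X]

noncomputable def crossBilin (b : V →L[ℝ] W →L[ℝ] X) (v : Fin 3 → V) (w : Fin 3 → W) :
    Fin 3 → X :=
  fun α => ∑ μ, ∑ ν, levicivita α μ ν • b (v μ) (w ν)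

lemma ContDiff.crossBilin {n : WithTop ℕ∞} (b : V →L[ℝ] W →L[ℝ] X) {u : ℝ³ → Fin 3 → V}
    {v : ℝ³ → Fin 3 → W} (hu : ContDiff ℝ n u) (hv : ContDiff ℝ n v) :
    ContDiff ℝ n fun y => crossBilin b (u y) (v y) :=
  contDiff_pi.2 fun _ => ContDiff.sum fun μ _ => ContDiff.sum fun ν _ =>
    ((b.contDiff.comp (contDiff_pi.1 hu μ)).clm_apply (contDiff_pi.1 hv ν)).const_smul _

lemma div3_crossBilin (b : V →L[ℝ] W →L[ℝ] X) {u : ℝ³ → Fin 3 → V} {v : ℝ³ → Fin 3 → W}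
    {x : ℝ³} (hu : DifferentiableAt ℝ u x) (hv : DifferentiableAt ℝ v x) :
    div3 (fun y => crossBilin b (u y) (v y)) x
      = ∑ α, b (curl3 u x α) (v x α) - ∑ α, b (u x α) (curl3 v x α) := by
  have huμ := differentiableAt_pi.1 hu
  have hvμ := differentiableAt_pi.1 hv
  have hprod : ∀ μ ν, DifferentiableAt ℝ (fun y => b (u y μ) (v y ν)) x := fun μ ν =>
    (b.hasFDerivAt_of_bilinear (huμ μ).hasFDerivAt (hvμ ν).hasFDerivAt).differentiableAt
  have hexpand : ∀ d, pderiv3 d (fun y => crossBilin b (u y) (v y) d) x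
      = ∑ μ, ∑ ν, levicivita d μ ν • (b (pderiv3 d (fun y => u y μ) x) (v x ν)
          + b (u x μ) (pderiv3 d (fun y => v y ν) x)) := by
    intro d
    simp only [crossBilin]
    rw [pderiv3_sum (f := fun μ y => ∑ ν, levicivita d μ ν • b (u y μ) (v y ν))
      fun μ _ => (DifferentiableAt.fun_sum fun ν _ =>
      (hprod μ ν).const_smul _)]
    refine Finset.sum_congr rfl fun μ _ => ?_
    rw [pderiv3_sum (f := fun ν y => levicivita d μ ν • b (u y μ) (v y ν))
      fun ν _ => (hprod μ ν).const_smul _]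
    refine Finset.sum_congr rfl fun ν _ => ?_
    rw [pderiv3_const_smul (hprod μ ν), pderiv3_bilin b (huμ μ) (hvμ ν)]
  simp only [div3, hexpand, curl3, smul_add, Finset.sum_add_distrib, map_sum, map_smul,
    sum_apply, smul_apply, sub_eq_add_neg]
  congr 1
  · exact sum_levicivita_smul_cycle fun d μ ν => b (pderiv3 d (fun y => u y μ) x) (v x ν)
  · conv_rhs => rw [Finset.sum_comm]
    simp only [← Finset.sum_neg_distrib, ← neg_smul, ← levicivita_swap_left]

end CrossProduct

lemma differentiableAt_slice {H V : Type*} [NormedAddCommGroup H] [NormedSpace ℝ H]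
    [NormedAddCommGroup V] [NormedSpace ℝ V] {F : ℝ → H → V}
    (hF : Differentiable ℝ fun p : ℝ × H => F p.1 p.2) (t : ℝ) (x : H) :
    DifferentiableAt ℝ (fun s => F s x) t :=
  DifferentiableAt.comp (g := fun p : ℝ × H => F p.1 p.2) (f := fun s => (s, x)) t (hF (t, x))
    (differentiableAt_id.prodMk (differentiableAt_const x))

section ParametricIntegral

variable {H V : Type*} [NormedAddCommGroup H] [NormedSpace ℝ H] [FiniteDimensional ℝ H]
  [MeasurableSpace H] [OpensMeasurableSpace H] {ρ : Measure H} [IsFiniteMeasureOnCompacts ρ]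
  [NormedAddCommGroup V] [NormedSpace ℝ V] {Φ : ℝ × H → V} {K : Set H}

lemma hasDerivAt_integral_of_contDiff (hΦ : ContDiff ℝ 1 Φ) (hK : IsCompact K)
    (hΦK : ∀ t, ∀ x ∉ K, Φ (t, x) = 0) (t₀ : ℝ) :
    HasDerivAt (fun t => ∫ x, Φ (t, x) ∂ρ) (∫ x, deriv (fun t => Φ (t, x)) t₀ ∂ρ) t₀ := by
  set Φ' : ℝ × H → V := fun p => fderiv ℝ Φ p (1, 0)
  have hΦ'cont : Continuous Φ' := (hΦ.continuous_fderiv one_ne_zero).clm_apply continuous_const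
  have hslice : ∀ t x, HasDerivAt (fun s => Φ (s, x)) (Φ' (t, x)) t := fun t x =>
    (hΦ.differentiable one_ne_zero (t, x)).hasFDerivAt.comp_hasDerivAt t
      ((hasDerivAt_id t).prodMk (hasDerivAt_const t x))
  have hΦ'K : ∀ t, ∀ x ∉ K, Φ' (t, x) = 0 := fun t x hx =>
    (hslice t x).unique (by simpa only [hΦK _ x hx] using hasDerivAt_const t (0 : V))
  obtain ⟨M, hM⟩ := (isCompact_Icc (a := t₀ - 1) (b := t₀ + 1)).prod hK
    |>.exists_bound_of_continuousOn hΦ'cont.continuousOn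
  have hbound : ∀ x, ∀ t ∈ Set.Icc (t₀ - 1) (t₀ + 1), ‖Φ' (t, x)‖ ≤ K.indicator (fun _ => M) x := by
    intro x t ht
    by_cases hx : x ∈ K
    · simpa [Set.indicator_of_mem hx] using hM (t, x) ⟨ht, hx⟩
    · simp [Set.indicator_of_notMem hx, hΦ'K t x hx]
  have hcont : ∀ t, Continuous fun x => Φ (t, x) := fun t =>
    hΦ.continuous.comp (continuous_const.prodMk continuous_id)
  have hmain := hasDerivAt_integral_of_dominated_loc_of_deriv_le (μ := ρ) (x₀ := t₀)
    (F := fun t x => Φ (t, x)) (F' := fun t x => Φ' (t, x)) (bound := K.indicator fun _ => M)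
    (Icc_mem_nhds (by linarith) (by linarith))
    (Filter.Eventually.of_forall fun t => (hcont t).aestronglyMeasurable)
    ((hcont t₀).integrable_of_hasCompactSupport
      (HasCompactSupport.intro hK fun x hx => hΦK t₀ x hx))
    (hΦ'cont.comp (continuous_const.prodMk continuous_id)).aestronglyMeasurable
    (ae_of_all _ hbound)
    ((integrable_indicator_iff hK.measurableSet).2 (integrableOn_const hK.measure_lt_top.ne))
    (ae_of_all _ fun x t _ => hslice t x)
  simpa only [(hslice t₀ _).deriv] using hmain.2

lemma integral_eq_of_integral_deriv_eq_zero (hΦ : ContDiff ℝ 1 Φ) (hK : IsCompact K)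
    (hΦK : ∀ t, ∀ x ∉ K, Φ (t, x) = 0) (h : ∀ t, ∫ x, deriv (fun t => Φ (t, x)) t ∂ρ = 0)
    (t t' : ℝ) : ∫ x, Φ (t, x) ∂ρ = ∫ x, Φ (t', x) ∂ρ :=
  is_const_of_deriv_eq_zero
    (fun s => (hasDerivAt_integral_of_contDiff hΦ hK hΦK s).differentiableAt)
    (fun s => (hasDerivAt_integral_of_contDiff hΦ hK hΦK s).deriv.trans (h s)) t t'

end ParametricIntegral

section GaugeField

variable {𝔤 : Type*} [NormedAddCommGroup 𝔤] [NormedSpace ℝ 𝔤] {br : 𝔤 →L[ℝ] 𝔤 →L[ℝ] 𝔤}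
  {a : ℝ³ → Fin 3 → 𝔤} {q : ℝ³ → 𝔤} {x : ℝ³}

noncomputable def covGrad (br : 𝔤 →L[ℝ] 𝔤 →L[ℝ] 𝔤) (a : ℝ³ → Fin 3 → 𝔤) (q : ℝ³ → 𝔤)
    (x : ℝ³) : Fin 3 → 𝔤 :=
  fun μ => grad3 q x μ + br (a x μ) (q x)

/-- The field `B` of the evolution equations. -/
noncomputable def curvature (br : 𝔤 →L[ℝ] 𝔤 →L[ℝ] 𝔤) (a : ℝ³ → Fin 3 → 𝔤) (x : ℝ³) :
    Fin 3 → 𝔤 :=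
  fun α => curl3 a x α + (1 / 2 : ℝ) • crossBr br (a x) (a x) α

lemma ContDiff.covGrad {n : WithTop ℕ∞} (ha : ContDiff ℝ n a) (hq : ContDiff ℝ (n + 1) q) :
    ContDiff ℝ n (covGrad br a q) :=
  contDiff_pi.2 fun μ => (hq.pderiv3 le_rfl μ).add
    ((br.contDiff.comp (contDiff_pi.1 ha μ)).clm_apply (hq.of_le le_self_add))

lemma ContDiff.curvature {n : WithTop ℕ∞} (ha : ContDiff ℝ (n + 1) a) :
    ContDiff ℝ n (curvature br a) := by
  have haμ : ∀ μ, ContDiff ℝ (n + 1) fun y => a y μ := contDiff_pi.1 ha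
  refine contDiff_pi.2 fun α => ContDiff.add ?_ (ContDiff.const_smul _ ?_)
  · exact ContDiff.sum fun μ _ => ContDiff.sum fun ν _ =>
      ((haμ ν).pderiv3 le_rfl μ).const_smul _
  · exact ContDiff.sum fun μ _ => ContDiff.sum fun ν _ =>
      (((br.contDiff.comp (haμ μ)).clm_apply (haμ ν)).of_le le_self_add).const_smul _

lemma covGrad_eq_zero_of_notMem_tsupport (hx : x ∉ tsupport q) : covGrad br a q x = 0 := by
  funext μ
  simp [covGrad, grad3, pderiv3_eq_zero_of_notMem_tsupport hx, image_eq_zero_of_notMem_tsupport hx]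

lemma curl3_covGrad_add_crossBr (br_alt : ∀ a : 𝔤, br a a = 0)
    (br_jacobi : ∀ a b c : 𝔤, br a (br b c) + br b (br c a) + br c (br a b) = 0)
    (ha : DifferentiableAt ℝ a x) (hq : ContDiffAt ℝ 2 q x) (α : Fin 3) :
    curl3 (covGrad br a q) x α + crossBr br (a x) (covGrad br a q x) α
      = br (curvature br a x α) (q x) := by
  have haν : ∀ ν, DifferentiableAt ℝ (fun y => a y ν) x := differentiableAt_pi.1 ha
  have hqd : DifferentiableAt ℝ q x := hq.differentiableAt two_ne_zero
  have hgrad : ∀ ν, DifferentiableAt ℝ (pderiv3 ν q) x := fun ν =>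
    ((hq.fderiv_right (m := 1) le_rfl).differentiableAt one_ne_zero).clm_apply
      (differentiableAt_const _)
  have hexp : ∀ μ ν, pderiv3 μ (fun y => covGrad br a q y ν) x + br (a x μ) (covGrad br a q x ν)
      = pderiv3 μ (pderiv3 ν q) x + br (pderiv3 μ (fun y => a y ν) x) (q x)
        + (br (a x ν) (pderiv3 μ q x) + br (a x μ) (pderiv3 ν q x))
        + br (a x μ) (br (a x ν) (q x)) := by
    intro μ ν
    have hprod : DifferentiableAt ℝ (fun y => br (a y ν) (q y)) x :=
      (br.hasFDerivAt_of_bilinear (haν ν).hasFDerivAt hqd.hasFDerivAt).differentiableAt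
    rw [show (fun y => covGrad br a q y ν) = fun y => pderiv3 ν q y + br (a y ν) (q y) from rfl,
      pderiv3_add (hgrad ν) hprod, pderiv3_bilin br (haν ν) hqd]
    simp only [covGrad, grad3, map_add]
    abel
  have hjacobi : ∑ μ, ∑ ν, levicivita α μ ν • br (a x μ) (br (a x ν) (q x))
      = br ((1 / 2 : ℝ) • crossBr br (a x) (a x) α) (q x) := by
    rw [sum_levicivita_smul_eq_half_sub]
    simp only [← bracket_bracket br_alt br_jacobi, crossBr, map_smul, map_sum, smul_apply,
      sum_apply]
  calc curl3 (covGrad br a q) x α + crossBr br (a x) (covGrad br a q x) α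
      = ∑ μ, ∑ ν, levicivita α μ ν •
          (pderiv3 μ (fun y => covGrad br a q y ν) x + br (a x μ) (covGrad br a q x ν)) := by
        simp only [curl3, crossBr, smul_add, Finset.sum_add_distrib]
    _ = ∑ μ, ∑ ν, levicivita α μ ν • pderiv3 μ (pderiv3 ν q) x
        + ∑ μ, ∑ ν, levicivita α μ ν • br (pderiv3 μ (fun y => a y ν) x) (q x)
        + ∑ μ, ∑ ν, levicivita α μ ν • (br (a x ν) (pderiv3 μ q x) + br (a x μ) (pderiv3 ν q x))
        + ∑ μ, ∑ ν, levicivita α μ ν • br (a x μ) (br (a x ν) (q x)) := by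
        simp only [hexp, smul_add, Finset.sum_add_distrib]
    _ = br (curl3 a x α) (q x) + br ((1 / 2 : ℝ) • crossBr br (a x) (a x) α) (q x) := by
        rw [sum_levicivita_smul_eq_zero_of_symm α fun μ ν => pderiv3_comm hq μ ν,
          sum_levicivita_smul_eq_zero_of_symm α fun μ ν => add_comm _ _, hjacobi]
        simp only [curl3, map_sum, map_smul, sum_apply, smul_apply, zero_add, add_zero]
    _ = br (curvature br a x α) (q x) := by
        rw [curvature, map_add, add_apply]

lemma sum_invariant_yangMills_covGrad_eq_div3 {ip : 𝔤 →L[ℝ] 𝔤 →L[ℝ] ℝ}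
    (br_alt : ∀ a : 𝔤, br a a = 0)
    (br_jacobi : ∀ a b c : 𝔤, br a (br b c) + br b (br c a) + br c (br a b) = 0)
    (ip_ad : ∀ a b c : 𝔤, ip (br a b) c = ip a (br b c))
    (ha : ContDiff ℝ 2 a) (hq : ContDiff ℝ 2 q) (x : ℝ³) :
    ∑ α, ip (curl3 (curvature br a) x α + crossBr br (a x) (curvature br a x) α)
        (covGrad br a q x α)
      = div3 (fun y => crossBilin ip (curvature br a y) (covGrad br a q y)) x := by
  set F := curvature br a
  set C := covGrad br a q
  have hF : DifferentiableAt ℝ F x := (ha.curvature (n := 1)).differentiable one_ne_zero x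
  have hC : DifferentiableAt ℝ C x :=
    ((ha.of_le one_le_two).covGrad (n := 1) hq).differentiable one_ne_zero x
  have hDC : ∀ α, curl3 C x α + crossBr br (a x) (C x) α = br (F x α) (q x) :=
    curl3_covGrad_add_crossBr br_alt br_jacobi (ha.differentiable two_ne_zero x) hq.contDiffAt
  rw [div3_crossBilin ip hF hC]
  calc ∑ α, ip (curl3 F x α + crossBr br (a x) (F x) α) (C x α)
      = ∑ α, ip (curl3 F x α) (C x α) + ∑ α, ip (crossBr br (a x) (F x) α) (C x α) := by
        simp only [map_add, add_apply, Finset.sum_add_distrib]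
    _ = ∑ α, ip (curl3 F x α) (C x α) - ∑ α, ip (F x α) (curl3 C x α)
        + ∑ α, ip (F x α) (curl3 C x α + crossBr br (a x) (C x) α) := by
        rw [sum_invariant_crossBr br_alt ip_ad]
        simp only [map_add, Finset.sum_add_distrib]
        abel
    _ = ∑ α, ip (curl3 F x α) (C x α) - ∑ α, ip (F x α) (curl3 C x α) := by
        simp only [hDC, invariant_bracket_self br_alt ip_ad, Finset.sum_const_zero, add_zero]

lemma integral_sum_invariant_yangMills_covGrad_eq_zero {ip : 𝔤 →L[ℝ] 𝔤 →L[ℝ] ℝ}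
    (br_alt : ∀ a : 𝔤, br a a = 0)
    (br_jacobi : ∀ a b c : 𝔤, br a (br b c) + br b (br c a) + br c (br a b) = 0)
    (ip_ad : ∀ a b c : 𝔤, ip (br a b) c = ip a (br b c))
    (ha : ContDiff ℝ 2 a) (hq : ContDiff ℝ 2 q) (hqs : HasCompactSupport q) :
    ∫ x, ∑ α, ip (curl3 (curvature br a) x α + crossBr br (a x) (curvature br a x) α)
        (covGrad br a q x α) = 0 := by
  simp only [sum_invariant_yangMills_covGrad_eq_div3 br_alt br_jacobi ip_ad ha hq]
  refine integral_div3_eq_zero ((ha.curvature (n := 1)).crossBilin ip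
    ((ha.of_le one_le_two).covGrad hq)) (HasCompactSupport.intro hqs.isCompact fun x hx => ?_)
  funext α
  simp [crossBilin, covGrad_eq_zero_of_notMem_tsupport hx]

lemma contDiff_sum_invariant_covGrad_uncurry {ip : 𝔤 →L[ℝ] 𝔤 →L[ℝ] ℝ} {n : WithTop ℕ∞}
    {A E : ℝ → ℝ³ → Fin 3 → 𝔤} (hA : ContDiff ℝ n fun p : ℝ × ℝ³ => A p.1 p.2)
    (hE : ContDiff ℝ n fun p : ℝ × ℝ³ => E p.1 p.2) (hq : ContDiff ℝ (n + 1) q) :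
    ContDiff ℝ n fun p : ℝ × ℝ³ => ∑ μ, ip (E p.1 p.2 μ) (covGrad br (A p.1) q p.2 μ) :=
  ContDiff.sum fun μ _ => (ip.contDiff.comp (contDiff_pi.1 hE μ)).clm_apply
    (((hq.pderiv3 le_rfl μ).comp contDiff_snd).add
      ((br.contDiff.comp (contDiff_pi.1 hA μ)).clm_apply
        ((hq.of_le le_self_add).comp contDiff_snd)))

lemma hasDerivAt_sum_invariant_covGrad {ip : 𝔤 →L[ℝ] 𝔤 →L[ℝ] ℝ} (br_alt : ∀ a : 𝔤, br a a = 0)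
    (ip_ad : ∀ a b c : 𝔤, ip (br a b) c = ip a (br b c)) {e a : ℝ → Fin 3 → 𝔤}
    {e' : Fin 3 → 𝔤} {t : ℝ} (g : Fin 3 → 𝔤) (w : 𝔤)
    (he : ∀ μ, HasDerivAt (fun s => e s μ) (e' μ) t)
    (ha : ∀ μ, HasDerivAt (fun s => a s μ) (-e t μ) t) :
    HasDerivAt (fun s => ∑ μ, ip (e s μ) (g μ + br (a s μ) w))
      (∑ μ, ip (e' μ) (g μ + br (a t μ) w)) t := by
  refine HasDerivAt.fun_sum fun μ _ => ?_
  have hbr : HasDerivAt (fun s => g μ + br (a s μ) w) (br (-e t μ) w) t :=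
    ((br.flip w).hasFDerivAt.comp_hasDerivAt t (ha μ)).const_add (g μ)
  refine ((ip.hasFDerivAt.comp_hasDerivAt t (he μ)).clm_apply hbr).congr_deriv ?_
  simp [invariant_bracket_self br_alt ip_ad]

end GaugeField

theorem yangMills_weak_constraint_preservation_general {𝔤 : Type*} [NormedAddCommGroup 𝔤]
    [NormedSpace ℝ 𝔤] [FiniteDimensional ℝ 𝔤]
    (br : 𝔤 →L[ℝ] 𝔤 →L[ℝ] 𝔤)
    (br_alt : ∀ a : 𝔤, br a a = 0)
    (br_jacobi : ∀ a b c : 𝔤, br a (br b c) + br b (br c a) + br c (br a b) = 0)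
    (ip : 𝔤 →ₗ[ℝ] 𝔤 →ₗ[ℝ] ℝ)
    (ip_ad : ∀ a b c : 𝔤, ip (br a b) c = ip a (br b c))
    (A E : ℝ → EuclideanSpace ℝ (Fin 3) → Fin 3 → 𝔤)
    (hA : ContDiff ℝ (⊤ : ℕ∞) (fun p : ℝ × EuclideanSpace ℝ (Fin 3) => A p.1 p.2))
    (hE : ContDiff ℝ (⊤ : ℕ∞) (fun p : ℝ × EuclideanSpace ℝ (Fin 3) => E p.1 p.2))
    (B : ℝ → EuclideanSpace ℝ (Fin 3) → Fin 3 → 𝔤)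
    (hB : ∀ t : ℝ, B t = fun y α => curl3 (A t) y α + (1/2 : ℝ) • crossBr br (A t y) (A t y) α)
    (hevolA : ∀ (t : ℝ) (x : EuclideanSpace ℝ (Fin 3)) (μ : Fin 3),
      deriv (fun s => A s x μ) t = - E t x μ)
    (hevolE : ∀ (t : ℝ) (x : EuclideanSpace ℝ (Fin 3)) (α : Fin 3),
      deriv (fun s => E s x α) t = curl3 (B t) x α + crossBr br (A t x) (B t x) α) :
    ∀ q : EuclideanSpace ℝ (Fin 3) → 𝔤, ContDiff ℝ (⊤ : ℕ∞) q → HasCompactSupport q →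
      ∀ t t' : ℝ,
        (∫ x : EuclideanSpace ℝ (Fin 3),
            ∑ μ : Fin 3, ip (E t x μ) (grad3 q x μ + br (A t x μ) (q x)))
          = ∫ x : EuclideanSpace ℝ (Fin 3),
              ∑ μ : Fin 3, ip (E t' x μ) (grad3 q x μ + br (A t' x μ) (q x)) := by
  intro q hq hqs t t'
  set ipc := ip.toContinuousBilinearMap
  have h1 : (1 : WithTop ℕ∞) ≤ (⊤ : ℕ∞) := WithTop.coe_le_coe.mpr le_top
  have h2 : (2 : WithTop ℕ∞) ≤ (⊤ : ℕ∞) := WithTop.coe_le_coe.mpr le_top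
  have hslice : ∀ F : ℝ → ℝ³ → Fin 3 → 𝔤, ContDiff ℝ (⊤ : ℕ∞) (fun p : ℝ × ℝ³ => F p.1 p.2) →
      ∀ s x μ, DifferentiableAt ℝ (fun s => F s x μ) s := fun F hF s x μ =>
    differentiableAt_slice (F := fun s y => F s y μ)
      ((contDiff_pi.1 hF μ).differentiable (by simp)) s x
  have hdensity : ∀ s x, deriv (fun s => ∑ μ, ipc (E s x μ) (covGrad br (A s) q x μ)) s
      = ∑ α, ipc (curl3 (curvature br (A s)) x α + crossBr br (A s x) (curvature br (A s) x) α)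
          (covGrad br (A s) q x α) := by
    intro s x
    refine (hasDerivAt_sum_invariant_covGrad (ip := ipc) br_alt ip_ad (grad3 q x) (q x)
      (fun μ => (hslice E hE s x μ).hasDerivAt.congr_deriv (hevolE s x μ))
      (fun μ => (hslice A hA s x μ).hasDerivAt.congr_deriv (hevolA s x μ))).deriv.trans ?_
    rw [hB s]
    rfl
  refine integral_eq_of_integral_deriv_eq_zero (ρ := volume)
    (contDiff_sum_invariant_covGrad_uncurry (ip := ipc) (br := br) (hA.of_le h1) (hE.of_le h1)
      (hq.of_le h2))
    hqs.isCompact (fun s x hx => ?_) (fun s => ?_) t t'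
  · simp [covGrad_eq_zero_of_notMem_tsupport hx]
  · simp only [hdensity]
    exact integral_sum_invariant_yangMills_covGrad_eq_zero br_alt br_jacobi ip_ad
      ((hA.comp (contDiff_const.prodMk contDiff_id)).of_le h2) (hq.of_le h2) hqs

/-- for smooth solutions of the Yang–Mills evolution on `ℝ³` (temporal
gauge) and an Ad-invariant inner product `ip` on `𝔤`, the weak constraint
`t ↦ ∫ Σ_μ ⟨E(t)(μ), (grad q)(μ) + ⁅A(t)(μ), q⁆⟩` is constant in time, for every smooth
compactly supported `q`. -/
theorem yangMills_weak_constraint_preservation {𝔤 : Type*} [NormedAddCommGroup 𝔤]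
    [NormedSpace ℝ 𝔤] [FiniteDimensional ℝ 𝔤]
    (br : 𝔤 →L[ℝ] 𝔤 →L[ℝ] 𝔤)
    (br_alt : ∀ a : 𝔤, br a a = 0)
    (br_jacobi : ∀ a b c : 𝔤, br a (br b c) + br b (br c a) + br c (br a b) = 0)
    (ip : 𝔤 →ₗ[ℝ] 𝔤 →ₗ[ℝ] ℝ)
    (ip_symm : ∀ a b : 𝔤, ip a b = ip b a)
    (ip_pos : ∀ a : 𝔤, a ≠ 0 → 0 < ip a a)
    (ip_ad : ∀ a b c : 𝔤, ip (br a b) c = ip a (br b c))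
    (A E : ℝ → EuclideanSpace ℝ (Fin 3) → Fin 3 → 𝔤)
    (hA : ContDiff ℝ (⊤ : ℕ∞) (fun p : ℝ × EuclideanSpace ℝ (Fin 3) => A p.1 p.2))
    (hE : ContDiff ℝ (⊤ : ℕ∞) (fun p : ℝ × EuclideanSpace ℝ (Fin 3) => E p.1 p.2))
    (B : ℝ → EuclideanSpace ℝ (Fin 3) → Fin 3 → 𝔤)
    (hB : ∀ t : ℝ, B t = fun y α => curl3 (A t) y α + (1/2 : ℝ) • crossBr br (A t y) (A t y) α)
    (hevolA : ∀ (t : ℝ) (x : EuclideanSpace ℝ (Fin 3)) (μ : Fin 3),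
      deriv (fun s => A s x μ) t = - E t x μ)
    (hevolE : ∀ (t : ℝ) (x : EuclideanSpace ℝ (Fin 3)) (α : Fin 3),
      deriv (fun s => E s x α) t = curl3 (B t) x α + crossBr br (A t x) (B t x) α) :
    ∀ q : EuclideanSpace ℝ (Fin 3) → 𝔤, ContDiff ℝ (⊤ : ℕ∞) q → HasCompactSupport q →
      ∀ t t' : ℝ,
        (∫ x : EuclideanSpace ℝ (Fin 3),
            ∑ μ : Fin 3, ip (E t x μ) (grad3 q x μ + br (A t x μ) (q x)))
          = ∫ x : EuclideanSpace ℝ (Fin 3),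
              ∑ μ : Fin 3, ip (E t' x μ) (grad3 q x μ + br (A t' x μ) (q x)) :=
  yangMills_weak_constraint_preservation_general br br_alt br_jacobi ip ip_ad A E hA hE B hB hevolA
    hevolE
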